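/- arXiv:2203.11341 — 7 statements merged into one kernel-verified Lean document; each statement's English description precedes it below -/
import Mathlib

section
/- If a word w has periodic roots u and v (i.e., w is a prefix of u·w and of v·w) and |u| + |v| ≤ |w|, then u and v commute. -/
/-! The prefix of `w` of length `|u| + |v|` can be read off in two ways: through the root `u`
it is `u` followed by the first `|v|` letters of `w`, i.e. `u ++ v`; through the root `v` it is
`v ++ u`. -/

namespace List

variable {α : Type*}

theorem take_length_add_of_prefix_append {u w : List α} (h : w <+: u ++ w) {n : ℕ}
    (hn : u.length + n ≤ w.length) : w.take (u.length + n) = u ++ w.take n :=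
  calc w.take (u.length + n) = ((u ++ w).take w.length).take (u.length + n) := by
        conv_lhs => rw [prefix_iff_eq_take.1 h]
    _ = (u ++ w).take (u.length + n) := by rw [take_take, min_eq_left hn]
    _ = u ++ w.take n := take_length_add_append n

theorem take_length_of_prefix_append {u w : List α} (h : w <+: u ++ w)
    (hu : u.length ≤ w.length) : w.take u.length = u := by
  simpa using take_length_add_of_prefix_append h (n := 0) hu

end List

/-- Periodicity lemma (Fine and Wilf, weak form). -/
theorem per_lemma_comm {α : Type*} (u v w : List α)
    (hu : w <+: u ++ w) (hv : w <+: v ++ w)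
    (hlen : u.length + v.length ≤ w.length) :
    u ++ v = v ++ u := by
  have huv : w.take (u.length + v.length) = u ++ v := by
    rw [List.take_length_add_of_prefix_append hu hlen,
      List.take_length_of_prefix_append hv (by omega)]
  have hvu : w.take (v.length + u.length) = v ++ u := by
    rw [List.take_length_add_of_prefix_append hv (by omega),
      List.take_length_of_prefix_append hu (by omega)]
  rw [← huv, ← hvu, Nat.add_comm]
end

section
/- If both u·v and u·v·v are imprimitive, then u and v commute. -/
/-- `wpow u n` is the `n`-fold concatenation of the word `u` with itself. -/
def wpow {α : Type*} (u : List α) (n : ℕ) : List α := (List.replicate n u).flatten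

/-- A word is imprimitive if it is empty or a proper power. -/
def Imprim {α : Type*} (w : List α) : Prop := ∃ (t : List α) (k : ℕ), 2 ≤ k ∧ w = wpow t k

/-!
Write `u·v = t^k` and `u·v·v = s^m` with `k, m ≥ 2`. The word `v·u·v` is a factor of both
`t^(2k)` and `s^(2m)`, so it has periods `|t|` and `|s|`, and its length is at least `|s| + |t|`.
By the Fine–Wilf periodicity lemma it has period `g = gcd |s| |t|`, and so does its factor `u·v`.
Since `g` divides `|u·v|` and `|u·v·v|`, it divides `|u|` and `|v|`; rotating a word of period `g`
by a multiple of `g` does not change it, so `v·u`, the rotation of `u·v` by `|u|`, equals `u·v`.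
-/

namespace List

variable {α : Type*}

theorem wpow_add (u : List α) (a b : ℕ) : wpow u (a + b) = wpow u a ++ wpow u b := by
  rw [wpow, wpow, wpow, replicate_add, flatten_append]

theorem length_wpow (u : List α) (n : ℕ) : (wpow u n).length = n * u.length := by
  simp [wpow]

theorem hasPeriod_wpow (u : List α) (n : ℕ) : HasPeriod (wpow u n) u.length := by
  cases n with
  | zero => exact hasPeriod_empty _
  | succ n =>
    have hone : wpow u 1 = u := by simp [wpow]
    have hswap : wpow u n ++ wpow u 1 = wpow u 1 ++ wpow u n := by
      rw [← wpow_add, ← wpow_add, Nat.add_comm]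
    rw [hone] at hswap
    rw [HasPeriod, Nat.add_comm, wpow_add, hone, take_left, prefix_append_right_inj]
    exact ⟨u, hswap⟩

theorem HasPeriod.rotate_eq_self {w : List α} {p n : ℕ} (hw : HasPeriod w p) (hn : p ∣ n)
    (hlen : p ∣ w.length) : w.rotate n = w := by
  rw [hasPeriod_iff_forall_getElem?_mod] at hw
  apply ext_getElem?
  intro i
  rcases lt_or_ge i w.length with hi | hi
  · obtain ⟨c, rfl⟩ := hn
    rw [getElem?_rotate hi, hw _ (Nat.mod_lt _ (by omega)), hw i hi,
      Nat.mod_mod_of_dvd _ hlen, Nat.add_mul_mod_self_left]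
  · rw [getElem?_eq_none (by simpa using hi), getElem?_eq_none hi]

theorem append_comm_of_hasPeriod {x y : List α} {p : ℕ} (h : HasPeriod (x ++ y) p)
    (hx : p ∣ x.length) (hy : p ∣ y.length) : x ++ y = y ++ x := by
  rw [← rotate_append_length_eq x y]
  exact (h.rotate_eq_self hx (by simpa using Nat.dvd_add hx hy)).symm

end List

open List in
/-- If both `u·v` and `u·v·v` are imprimitive, then `u` and `v` commute. -/
theorem imprim_ext_suf_comm {α : Type*} (u v : List α)
    (h1 : Imprim (u ++ v)) (h2 : Imprim (u ++ v ++ v)) :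
    u ++ v = v ++ u := by
  obtain ⟨t, k, hk, ht⟩ := h1
  obtain ⟨s, m, hm, hs⟩ := h2
  have hper_t : HasPeriod (v ++ u ++ v) t.length :=
    (hasPeriod_wpow t (k + k)).infix ⟨u, [], by simp [wpow_add, ← ht]⟩
  have hper_s : HasPeriod (v ++ u ++ v) s.length :=
    (hasPeriod_wpow s (m + m)).infix ⟨u ++ v, v, by simp [wpow_add, ← hs]⟩
  have hlen_t := congrArg length ht
  have hlen_s := congrArg length hs
  simp only [length_append, length_wpow] at hlen_t hlen_s
  set g := s.length.gcd t.length
  have hper : HasPeriod (v ++ u ++ v) g := by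
    refine hper_s.gcd hper_t ?_
    have : 2 * t.length ≤ k * t.length := Nat.mul_le_mul_right _ hk
    have : 2 * s.length ≤ m * s.length := Nat.mul_le_mul_right _ hm
    simp only [length_append]
    omega
  have hdvd_uv : g ∣ u.length + v.length :=
    hlen_t ▸ Dvd.dvd.mul_left (Nat.gcd_dvd_right _ _) k
  have hdvd_uvv : g ∣ u.length + v.length + v.length :=
    hlen_s ▸ Dvd.dvd.mul_left (Nat.gcd_dvd_left _ _) m
  have hdvd_v : g ∣ v.length := (Nat.dvd_add_right hdvd_uv).mp hdvd_uvv
  have hdvd_u : g ∣ u.length := (Nat.dvd_add_left hdvd_v).mp hdvd_uv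
  exact append_comm_of_hasPeriod (hper.infix ⟨v, [], by simp⟩) hdvd_u hdvd_v
end

section
/- Let x and y be non-commuting words. If x·y = z^ℓ with ℓ ≥ 2, then there exist non-commuting words r and q and integers m, n ≥ 0 with m + n + 1 = ℓ such that x = (r·q)^m · r, y = q·(r·q)^n, and z = r·q. -/
/-!
Cut `z^ℓ = x·y` at position `|x| = m|z| + s` with `s < |z|`: writing `z = r·q` with `|r| = s`,
this gives `x = z^m·r` and `y = q·z^n`. If `r` and `q` commuted, so would every word built from
them, in particular `x` and `y`.
-/

namespace Word

variable {α : Type*}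

theorem wpow_add (u : List α) (a b : ℕ) : wpow u (a + b) = wpow u a ++ wpow u b := by
  simp only [wpow, List.replicate_add, List.flatten_append]

theorem wpow_one (u : List α) : wpow u 1 = u := by
  simp [wpow]

theorem length_wpow (u : List α) (n : ℕ) : (wpow u n).length = n * u.length := by
  simp [wpow, List.sum_replicate]

theorem append_wpow_comm {u v : List α} (h : v ++ u = u ++ v) (n : ℕ) :
    v ++ wpow u n = wpow u n ++ v := by
  induction n with
  | zero => simp [wpow]
  | succ k ih =>
    rw [wpow_add, wpow_one, ← List.append_assoc, ih, List.append_assoc, h, List.append_assoc]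

theorem wpow_add_add_one (z : List α) (m n s : ℕ) :
    wpow z (m + n + 1) = (wpow z m ++ z.take s) ++ (z.drop s ++ wpow z n) := by
  rw [add_assoc, add_comm n, wpow_add, wpow_add, wpow_one]
  simp only [List.append_assoc]
  rw [← List.append_assoc (z.take s), List.take_append_drop]

theorem exists_eq_of_append_eq_wpow {x y z : List α} {l : ℕ}
    (h : x ++ y = wpow z l) (hy : y ≠ []) :
    ∃ s m n, m + n + 1 = l ∧ x = wpow z m ++ z.take s ∧ y = z.drop s ++ wpow z n := by
  have hlen : x.length + y.length = l * z.length := by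
    simpa [length_wpow] using congrArg List.length h
  have hy_pos : 0 < y.length := List.length_pos_iff.mpr hy
  have hz_pos : 0 < z.length := Nat.pos_of_ne_zero fun h0 => by rw [h0, mul_zero] at hlen; omega
  set m := x.length / z.length
  set s := x.length % z.length
  have hm : m < l := (Nat.div_lt_iff_lt_mul hz_pos).mpr (by omega)
  have hs : s < z.length := Nat.mod_lt _ hz_pos
  have hsplit : x ++ y = (wpow z m ++ z.take s) ++ (z.drop s ++ wpow z (l - m - 1)) := by
    rw [h, ← wpow_add_add_one]
    congr 1
    omega
  have hxlen : x.length = (wpow z m ++ z.take s).length := by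
    simp only [List.length_append, length_wpow, List.length_take, min_eq_left hs.le]
    exact (Nat.div_add_mod' _ _).symm
  obtain ⟨hx, hy⟩ := List.append_inj hsplit hxlen
  exact ⟨s, m, l - m - 1, by omega, hx, hy⟩

theorem append_comm_of_split {r q : List α} (h : r ++ q = q ++ r) (m n : ℕ) :
    (wpow (r ++ q) m ++ r) ++ (q ++ wpow (r ++ q) n)
      = (q ++ wpow (r ++ q) n) ++ (wpow (r ++ q) m ++ r) := by
  have hq : q ++ (r ++ q) = (r ++ q) ++ q := by rw [← List.append_assoc, ← h]
  calc (wpow (r ++ q) m ++ r) ++ (q ++ wpow (r ++ q) n)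
      = wpow (r ++ q) ((n + m) + 1) := by
        rw [show n + m + 1 = m + 1 + n by omega, wpow_add, wpow_add, wpow_one]
        simp only [List.append_assoc]
    _ = wpow (r ++ q) (n + m) ++ (q ++ r) := by rw [wpow_add, wpow_one, h]
    _ = (q ++ wpow (r ++ q) n) ++ (wpow (r ++ q) m ++ r) := by
        rw [← List.append_assoc, ← append_wpow_comm hq, wpow_add]
        simp only [List.append_assoc]

end Word

open Word in
theorem LS_case_B_general {α : Type*} (x y z : List α) (l : ℕ)
    (hcomm : x ++ y ≠ y ++ x) (h : x ++ y = wpow z l) :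
    ∃ (r q : List α) (m n : ℕ), r ++ q ≠ q ++ r ∧ m + n + 1 = l ∧
      x = wpow (r ++ q) m ++ r ∧ y = q ++ wpow (r ++ q) n ∧ z = r ++ q := by
  have hy_ne : y ≠ [] := by
    rintro rfl
    simp at hcomm
  obtain ⟨s, m, n, hmn, hx, hy⟩ := exists_eq_of_append_eq_wpow h hy_ne
  have hz : z.take s ++ z.drop s = z := List.take_append_drop s z
  refine ⟨z.take s, z.drop s, m, n, fun hrq => hcomm ?_, hmn, by rwa [hz], by rwa [hz], hz.symm⟩
  have hxy := append_comm_of_split hrq m n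
  rwa [hz, ← hx, ← hy] at hxy

/-- Case B of the parametric solution of `x^j y^k = z^ℓ`: the case `x·y = z^ℓ`, `ℓ ≥ 2`. -/
theorem LS_case_B {α : Type*} (x y z : List α) (l : ℕ)
    (hcomm : x ++ y ≠ y ++ x) (hl : 2 ≤ l) (h : x ++ y = wpow z l) :
    ∃ (r q : List α) (m n : ℕ), r ++ q ≠ q ++ r ∧ m + n + 1 = l ∧
      x = wpow (r ++ q) m ++ r ∧ y = q ++ wpow (r ++ q) n ∧ z = r ++ q :=
  LS_case_B_general x y z l hcomm h
end

section
/- Let x and y be non-commuting words, k ≥ 2, ℓ ≥ 2, and suppose x · y^k = z^ℓ with y^k a suffix of z. Then there exists a word q such that z = q·y^k and x = (q·y^k)^(ℓ−1) · q, and q does not commute with y. -/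
section

variable {α : Type*}

lemma wpow_succ (u : List α) (n : ℕ) : wpow u (n + 1) = u ++ wpow u n := by
  simp [wpow, List.replicate_succ]

lemma wpow_succ' (u : List α) (n : ℕ) : wpow u (n + 1) = wpow u n ++ u := by
  simp [wpow, List.replicate_succ']

lemma append_append_comm {a b c : List α} (ha : a ++ c = c ++ a) (hb : b ++ c = c ++ b) :
    a ++ b ++ c = c ++ (a ++ b) := by
  rw [List.append_assoc, hb, ← List.append_assoc, ha, List.append_assoc]

lemma wpow_append_comm {a b : List α} (h : a ++ b = b ++ a) (n : ℕ) :
    wpow a n ++ b = b ++ wpow a n := by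
  induction n with
  | zero => simp [wpow]
  | succ n ih => rw [wpow_succ]; exact append_append_comm h ih

lemma eq_wpow_append_of_append_eq_wpow_succ {x q s : List α} {n : ℕ}
    (h : x ++ s = wpow (q ++ s) (n + 1)) : x = wpow (q ++ s) n ++ q := by
  rw [wpow_succ', ← List.append_assoc] at h
  exact List.append_cancel_right h

end

theorem LS_case_D_general {α : Type*} (x y z : List α) (k l : ℕ)
    (hcomm : x ++ y ≠ y ++ x) (hl : 2 ≤ l)
    (h : x ++ wpow y k = wpow z l) (hsuf : wpow y k <:+ z) :
    ∃ q : List α, z = q ++ wpow y k ∧ x = wpow (q ++ wpow y k) (l - 1) ++ q ∧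
      q ++ y ≠ y ++ q := by
  obtain ⟨q, rfl⟩ := hsuf
  obtain ⟨n, rfl⟩ : ∃ n, l = n + 1 := ⟨l - 1, by omega⟩
  have hx : x = wpow (q ++ wpow y k) n ++ q := eq_wpow_append_of_append_eq_wpow_succ h
  refine ⟨q, rfl, by simpa using hx, fun hqy => hcomm ?_⟩
  have hzy := append_append_comm hqy (wpow_append_comm rfl k)
  rw [hx]
  exact append_append_comm (wpow_append_comm hzy n) hqy

/-- Case D of the parametric solution of `x^j y^k = z^ℓ`: the case `x·y^k = z^ℓ`,
`k ≥ 2`, `ℓ ≥ 2`, with `y^k` a suffix of `z`. -/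
theorem LS_case_D {α : Type*} (x y z : List α) (k l : ℕ)
    (hcomm : x ++ y ≠ y ++ x) (hk : 2 ≤ k) (hl : 2 ≤ l)
    (h : x ++ wpow y k = wpow z l) (hsuf : wpow y k <:+ z) :
    ∃ q : List α, z = q ++ wpow y k ∧ x = wpow (q ++ wpow y k) (l - 1) ++ q ∧
      q ++ y ≠ y ++ q :=
  LS_case_D_general x y z k l hcomm hl h hsuf
end

section
/- Let x, u, v, p be words with p in the submonoid generated by {u,v}, x a prefix of v·x, x a suffix of p·u·v·u, and |x| > |v·u|. Then u and v commute. -/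
/-!
Write `x = w·v·u`; `w` is nonempty and `w ≤s p·u`. Comparing prefixes in `x ≤p v·x` gives
`w·v = v·w` and `u ≤p v·u`. Let `r` be the shorter of `v` and `w`: it commutes with `v`, is a
suffix of `v` and of `p·u`, and `u ≤p r·u`. Reading `p·u` from the right, trailing `u`-blocks are
absorbed into a word `s` commuting with `u` until `r ≤s r·u·s`. Peeling trailing `u`'s off `r`
preserves all of this, and once `|r| ≤ |u|` the relations `r ≤s r·u` and `u ≤p r·u` force
`u·r = r·u`. Commutation is transitive through the nonempty word `r`: `u·v` and `v·u` are then
both prefixes of `r^ω` of the same length.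
-/

namespace List

variable {α : Type*}

theorem prefix_of_append_comm {a b : List α} (h : a ++ b = b ++ a) (hl : a.length ≤ b.length) :
    a <+: b :=
  prefix_of_prefix_length_le (prefix_append a b) (h ▸ prefix_append b a) hl

theorem suffix_of_append_comm {a b : List α} (h : a ++ b = b ++ a) (hl : a.length ≤ b.length) :
    a <:+ b :=
  suffix_of_suffix_length_le (h ▸ suffix_append b a) (suffix_append a b) hl

theorem eq_of_prefix_append_self {w y z : List α} (hw : w ≠ []) (hy : y <+: w ++ y)
    (hz : z <+: w ++ z) (hl : y.length = z.length) : y = z := by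
  rcases le_or_gt y.length w.length with hyw | hwy
  · have hyw' : y <+: w := prefix_of_prefix_length_le hy (prefix_append w y) hyw
    have hzw : z <+: w := prefix_of_prefix_length_le hz (prefix_append w z) (hl ▸ hyw)
    exact (prefix_of_prefix_length_le hyw' hzw hl.le).eq_of_length hl
  · obtain ⟨y₁, rfl⟩ := prefix_of_prefix_length_le (prefix_append w y) hy hwy.le
    obtain ⟨z₁, rfl⟩ := prefix_of_prefix_length_le (prefix_append w z) hz (by omega)
    have : y₁ = z₁ := eq_of_prefix_append_self hw ((prefix_append_right_inj w).mp hy)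
      ((prefix_append_right_inj w).mp hz) (by simpa using hl)
    rw [this]
termination_by y.length
decreasing_by all_goals subst_vars; simpa using length_pos_iff.mpr hw

theorem append_comm_trans {u v r : List α} (hr : r ≠ []) (hu : u ++ r = r ++ u)
    (hv : v ++ r = r ++ v) : u ++ v = v ++ u := by
  refine eq_of_prefix_append_self hr ⟨r, ?_⟩ ⟨r, ?_⟩ (by simp [Nat.add_comm])
  · rw [append_assoc, hv, ← append_assoc, hu, append_assoc]
  · rw [append_assoc, hu, ← append_assoc, hv, append_assoc]

theorem prefix_append_self_of_append_comm {u v w : List α} (hwv : w ++ v = v ++ w)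
    (hw : w <+: v) (hu : u <+: v ++ u) : u <+: w ++ u := by
  rcases eq_or_ne w [] with rfl | hw_ne
  · exact prefix_rfl
  have hwvu : w <+: v ++ u := hw.trans (prefix_append v u)
  rcases le_or_gt u.length w.length with huw | hwu
  · exact (prefix_of_prefix_length_le hu hwvu huw).trans (prefix_append w u)
  · obtain ⟨u₁, rfl⟩ := prefix_of_prefix_length_le hwvu hu hwu.le
    have hu₁ : u₁ <+: v ++ u₁ := by
      rwa [← append_assoc, ← hwv, append_assoc, prefix_append_right_inj] at hu
    exact (prefix_append_right_inj w).mpr (prefix_append_self_of_append_comm hwv hw hu₁)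
termination_by u.length
decreasing_by all_goals subst_vars; simpa using length_pos_iff.mpr hw_ne

theorem append_comm_of_prefix_of_suffix {u r : List α} (hu : u <+: r ++ u) (hr : r <:+ r ++ u) :
    u ++ r = r ++ u := by
  obtain ⟨s, hs⟩ := hr
  have hl : s.length = u.length := by have := congrArg length hs; simp at this; omega
  have hsu : u = s :=
    (prefix_of_prefix_length_le (hs ▸ hu) (prefix_append s r) hl.ge).eq_of_length hl.symm
  rw [← hs, hsu]

theorem append_comm_of_prefix_of_suffix_append {u r s : List α} (hs : u ++ s = s ++ u)
    (hu : u <+: r ++ u) (hr : r <:+ r ++ u ++ s) : u ++ r = r ++ u := by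
  rcases eq_or_ne u [] with rfl | hu_ne
  · simp
  have hr' : r <:+ r ++ s ++ u := by rwa [append_assoc, ← hs, ← append_assoc]
  rcases le_or_gt r.length u.length with hru | hur
  · have : r <:+ u := suffix_of_suffix_length_le hr' (suffix_append _ u) hru
    exact append_comm_of_prefix_of_suffix hu (this.trans (suffix_append r u))
  · obtain ⟨r₀, rfl⟩ := suffix_of_suffix_length_le (suffix_append _ u) hr' hur.le
    have hu₀ : u <+: r₀ ++ u :=
      prefix_of_prefix_length_le hu (prefix_append (r₀ ++ u) u) (by simp)
    have hr₀ : r₀ <:+ r₀ ++ u ++ s := by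
      rwa [append_assoc (r₀ ++ u), hs, ← append_assoc, suffix_append_self_iff] at hr
    have ih := append_comm_of_prefix_of_suffix_append hs hu₀ hr₀
    rw [← append_assoc, ih, append_assoc]
termination_by r.length
decreasing_by all_goals subst_vars; simpa using length_pos_iff.mpr hu_ne

theorem append_comm_of_suffix_flatten_append {u r : List α} (hu : u <+: r ++ u)
    {l : List (List α)} (hl : ∀ a ∈ l, a = u ∨ r <:+ a) {s : List α} (hs : u ++ s = s ++ u)
    (hr : r <:+ l.flatten ++ u ++ s) : u ++ r = r ++ u := by
  induction l using List.reverseRecOn generalizing s with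
  | nil =>
    refine append_comm_of_prefix_of_suffix_append hs hu ?_
    rw [append_assoc]
    exact (by simpa using hr : r <:+ u ++ s).trans (suffix_append r _)
  | append_singleton l a ih =>
    rw [flatten_concat] at hr
    rcases hl a (by simp) with rfl | ha
    · refine ih (fun b hb => hl b (by simp [hb])) (s := a ++ s) ?_ (by simpa using hr)
      rw [append_assoc, ← hs]
    · refine append_comm_of_prefix_of_suffix_append hs hu ?_
      have hra : r ++ u ++ s <:+ l.flatten ++ a ++ u ++ s := by
        simpa [append_assoc] using (suffix_append_self_iff (l₃ := u ++ s)).mpr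
          (ha.trans (suffix_append l.flatten a))
      exact suffix_of_suffix_length_le hr hra (by simp)

end List

open List in
/-- If `p` is generated by `{u,v}`, `x` is a prefix of `v·x`, `x` is a suffix of
`p·u·v·u`, and `|x| > |v·u|`, then `u` and `v` commute. -/
theorem pref_suf_pers_short {α : Type*} (x u v p : List α)
    (hp : ∃ l : List (List α), (∀ a ∈ l, a = u ∨ a = v) ∧ l.flatten = p)
    (hpref : x <+: v ++ x)
    (hsuf : x <:+ p ++ u ++ v ++ u)
    (hlen : (v ++ u).length < x.length) :
    u ++ v = v ++ u := by
  obtain ⟨l, hl, rfl⟩ := hp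
  rw [append_assoc _ v u] at hsuf
  obtain ⟨w, rfl⟩ : v ++ u <:+ x :=
    suffix_of_suffix_length_le (suffix_append _ _) hsuf hlen.le
  have hw : w ≠ [] := by
    rintro rfl
    simp at hlen
  have hwsuf : w <:+ l.flatten ++ u := suffix_append_self_iff.mp hsuf
  have hwv : w ++ v = v ++ w := by
    have h₁ : w ++ v <+: v ++ (w ++ (v ++ u)) := (by simp : w ++ v <+: w ++ (v ++ u)).trans hpref
    have h₂ : v ++ w <+: v ++ (w ++ (v ++ u)) :=
      (prefix_append_right_inj v).mpr (prefix_append w _)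
    have heq_len : (w ++ v).length = (v ++ w).length := by simp [Nat.add_comm]
    exact (prefix_of_prefix_length_le h₁ h₂ heq_len.le).eq_of_length heq_len
  have hu : u <+: v ++ u := by
    rwa [← append_assoc v w, ← hwv, append_assoc w v, prefix_append_right_inj,
      prefix_append_right_inj] at hpref
  rcases le_total w.length v.length with hwv_len | hvw_len
  · refine append_comm_trans hw ?_ hwv.symm
    refine append_comm_of_suffix_flatten_append
      (prefix_append_self_of_append_comm hwv (prefix_of_append_comm hwv hwv_len) hu)
      (fun a ha => (hl a ha).imp_right ?_) (s := []) (by simp) (by simpa using hwsuf)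
    rintro rfl
    exact suffix_of_append_comm hwv hwv_len
  · refine append_comm_of_suffix_flatten_append hu
      (fun a ha => (hl a ha).imp_right (by rintro rfl; exact suffix_rfl)) (s := []) (by simp) ?_
    simpa using (suffix_of_append_comm hwv.symm hvw_len).trans hwsuf
end

section
/- Let x, y be non-commuting words and let α = longest common prefix of x·y and y·x. Let z₀ and z₁ be lists over {x,y} such that concat z₀ and concat z₁ are not prefix-comparable. Then (concat z₀) ∧ₚ (concat z₁) = concat (z₀ ∧ₚ z₁) · α, where ∧ₚ on the left and right end denotes longest common prefix of words, and z₀ ∧ₚ z₁ denotes the longest common list-prefix of z₀ and z₁. -/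
/-!
When the two factorisations first differ, one concatenation continues with `x`, the other
with `y`, so the heart of the matter is that `x ++ u` and `y ++ v` with `u, v ∈ {x, y}∗`
diverge exactly where `x ++ y` and `y ++ x` do. This goes by the Euclidean algorithm on
`(x, y)`: if neither word is a prefix of the other, both pairs diverge inside `x` and `y`;
if `x = y ++ x'`, then `{y ++ x', y}∗ ⊆ {x', y}∗`, and after cancelling the common prefix `y`
the claim for `(y ++ x', y)` reduces to the claim for the shorter non-commuting pair `(x', y)`.
-/

/-- Longest common prefix of two lists. -/
def lcp {β : Type*} [DecidableEq β] : List β → List β → List β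
  | a :: l, b :: m => if a = b then a :: lcp l m else []
  | _, _ => []

open Language Computability

section Lcp

variable {β : Type*} [DecidableEq β]

@[simp]
theorem lcp_nil_left (v : List β) : lcp [] v = [] := by
  cases v <;> rfl

@[simp]
theorem lcp_nil_right (u : List β) : lcp u [] = [] := by
  cases u <;> rfl

theorem lcp_cons_cons_of_ne {a b : β} (h : a ≠ b) (l m : List β) : lcp (a :: l) (b :: m) = [] :=
  if_neg h

theorem lcp_comm : ∀ u v : List β, lcp u v = lcp v u
  | [], v => by simp
  | _ :: _, [] => by simp
  | a :: l, b :: m => by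
    by_cases h : a = b
    · subst h
      simp [lcp, lcp_comm l m]
    · rw [lcp_cons_cons_of_ne h, lcp_cons_cons_of_ne (Ne.symm h)]

theorem lcp_append_left : ∀ p s t : List β, lcp (p ++ s) (p ++ t) = p ++ lcp s t
  | [], _, _ => rfl
  | a :: p, s, t => by simp [lcp, lcp_append_left p s t]

theorem lcp_append_append_of_not_prefix :
    ∀ {p q : List β} (s t : List β), ¬ p <+: q → ¬ q <+: p → lcp (p ++ s) (q ++ t) = lcp p q
  | [], _, _, _, hpq, _ => absurd List.nil_prefix hpq
  | _ :: _, [], _, _, _, hqp => absurd List.nil_prefix hqp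
  | a :: p, b :: q, s, t, hpq, hqp => by
    by_cases h : a = b
    · subst h
      simp only [List.cons_prefix_cons, true_and] at hpq hqp
      simp [lcp, lcp_append_append_of_not_prefix s t hpq hqp]
    · simp only [List.cons_append, lcp_cons_cons_of_ne h]

end Lcp

section KStar

variable {α : Type*}

theorem append_mem_kstar {l : Language α} {u v : List α} (hu : u ∈ l∗) (hv : v ∈ l∗) :
    u ++ v ∈ l∗ := by
  rw [← kstar_mul_kstar l]
  exact append_mem_mul hu hv

theorem mem_kstar_of_mem {l : Language α} {a : List α} (h : a ∈ l) : a ∈ l∗ :=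
  (le_kstar : l ≤ l∗) h

theorem exists_eq_append_of_mem_kstar {l : Language α} {v : List α} (hv : v ∈ l∗) (h : v ≠ []) :
    ∃ a ∈ l, ∃ w ∈ l∗, v = a ++ w := by
  rw [← one_add_self_mul_kstar_eq_kstar, mem_add, mem_one, mem_mul] at hv
  obtain hnil | ⟨a, ha, w, hw, rfl⟩ := hv
  · exact absurd hnil h
  · exact ⟨a, ha, w, hw, rfl⟩

theorem kstar_pair_append_le (x y : List α) :
    ({y ++ x, y} : Language α)∗ ≤ ({x, y} : Language α)∗ := by
  have h : ({y ++ x, y} : Language α) ≤ ({x, y} : Language α)∗ := by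
    rintro a (ha | ha) <;> rw [ha]
    · exact append_mem_kstar (mem_kstar_of_mem (Or.inr rfl)) (mem_kstar_of_mem (Or.inl rfl))
    · exact mem_kstar_of_mem (Or.inr rfl)
  exact (kstar_mono h).trans (kstar_idem _).le

theorem exists_eq_append_of_mem_kstar_pair_append {x y v : List α}
    (hv : v ∈ ({y ++ x, y} : Language α)∗) (h : v ≠ []) :
    ∃ w ∈ ({x, y} : Language α)∗, v = y ++ w := by
  obtain ⟨a, ha | ha, w, hw, rfl⟩ := exists_eq_append_of_mem_kstar hv h <;> rw [ha]
  · exact ⟨x ++ w, append_mem_kstar (mem_kstar_of_mem (Or.inl rfl)) (kstar_pair_append_le x y hw),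
      List.append_assoc y x w⟩
  · exact ⟨w, kstar_pair_append_le x y hw, rfl⟩

end KStar

section HasSwapLcp

variable {α : Type*} [DecidableEq α]

def HasSwapLcp (x y : List α) : Prop :=
  ∀ u ∈ ({x, y} : Language α)∗, ∀ v ∈ ({x, y} : Language α)∗,
    ¬ (x ++ u <+: y ++ v ∨ y ++ v <+: x ++ u) → lcp (x ++ u) (y ++ v) = lcp (x ++ y) (y ++ x)

theorem HasSwapLcp.symm {x y : List α} (h : HasSwapLcp x y) : HasSwapLcp y x := by
  intro u hu v hv hnc
  have hyx : ({y, x} : Language α) = {x, y} := Set.pair_comm y x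
  rw [hyx] at hu hv
  rw [lcp_comm, h v hv u hu (fun hc => hnc hc.symm), lcp_comm]

theorem hasSwapLcp_of_not_prefix {x y : List α} (hxy : ¬ x <+: y) (hyx : ¬ y <+: x) :
    HasSwapLcp x y := fun u _ v _ _ => by
  rw [lcp_append_append_of_not_prefix u v hxy hyx, lcp_append_append_of_not_prefix y x hxy hyx]

theorem HasSwapLcp.append_left {x y : List α} (h : HasSwapLcp x y) : HasSwapLcp (y ++ x) y := by
  intro u hu v hv hnc
  have hv0 : v ≠ [] := by
    rintro rfl
    exact hnc (Or.inr ⟨x ++ u, by simp⟩)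
  obtain ⟨w, hw, rfl⟩ := exists_eq_append_of_mem_kstar_pair_append hv hv0
  simp only [List.append_assoc, List.prefix_append_right_inj] at hnc ⊢
  rw [lcp_append_left, lcp_append_left, h u (kstar_pair_append_le x y hu) w hw hnc]

theorem hasSwapLcp_of_append_ne {x y : List α} (h : x ++ y ≠ y ++ x) : HasSwapLcp x y := by
  induction hn : x.length + y.length using Nat.strong_induction_on generalizing x y with
  | _ n ih =>
  by_cases hyx : y <+: x
  · obtain ⟨x', rfl⟩ := hyx
    have hy : 0 < y.length := List.length_pos_iff.2 (by rintro rfl; simp at h)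
    have h' : x' ++ y ≠ y ++ x' := fun h' => h (by simp only [List.append_assoc, h'])
    exact (ih _ (by rw [← hn, List.length_append]; omega) h' rfl).append_left
  by_cases hxy : x <+: y
  · obtain ⟨y', rfl⟩ := hxy
    have hx : 0 < x.length := List.length_pos_iff.2 (by rintro rfl; simp at h)
    have h' : y' ++ x ≠ x ++ y' := fun h' => h (by simp only [List.append_assoc, h'])
    exact (ih _ (by rw [← hn, List.length_append]; omega) h' rfl).append_left.symm
  exact hasSwapLcp_of_not_prefix hxy hyx

end HasSwapLcp

/-- Longest common prefix of concatenations over a binary code: if `concat z₀` and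
`concat z₁` are not prefix-comparable, then their longest common prefix is
`concat (z₀ ∧ₚ z₁) · α` where `α = (x·y) ∧ₚ (y·x)`. -/
theorem bin_code_lcp_concat {α : Type*} [DecidableEq α] (x y : List α)
    (hcomm : x ++ y ≠ y ++ x)
    (z₀ z₁ : List (List α))
    (hz₀ : ∀ a ∈ z₀, a = x ∨ a = y) (hz₁ : ∀ a ∈ z₁, a = x ∨ a = y)
    (hnc : ¬ (z₀.flatten <+: z₁.flatten ∨ z₁.flatten <+: z₀.flatten)) :
    lcp z₀.flatten z₁.flatten = (lcp z₀ z₁).flatten ++ lcp (x ++ y) (y ++ x) := by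
  induction z₀ generalizing z₁ with
  | nil => exact absurd (Or.inl List.nil_prefix) hnc
  | cons c l ih =>
    obtain _ | ⟨d, m⟩ := z₁
    · exact absurd (Or.inr List.nil_prefix) hnc
    have hl : ∀ a ∈ l, a = x ∨ a = y := fun a ha => hz₀ a (List.mem_cons_of_mem c ha)
    have hm : ∀ a ∈ m, a = x ∨ a = y := fun a ha => hz₁ a (List.mem_cons_of_mem d ha)
    simp only [List.flatten_cons] at hnc ⊢
    by_cases hcd : c = d
    · subst hcd
      simp only [List.prefix_append_right_inj] at hnc
      simp [lcp, lcp_append_left, ih m hl hm hnc]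
    · rw [lcp_cons_cons_of_ne hcd, List.flatten_nil, List.nil_append]
      have hxy := hasSwapLcp_of_append_ne hcomm
      rcases (hz₀ c List.mem_cons_self).imp Eq.symm Eq.symm with rfl | rfl <;>
        rcases (hz₁ d List.mem_cons_self).imp Eq.symm Eq.symm with rfl | rfl
      · exact absurd rfl hcd
      · exact hxy _ (join_mem_kstar hl) _ (join_mem_kstar hm) hnc
      · rw [lcp_comm (x ++ y)]
        exact hxy.symm _ (join_mem_kstar fun a ha => (hl a ha).symm) _
          (join_mem_kstar fun a ha => (hm a ha).symm) hnc
      · exact absurd rfl hcd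
end

section
/- Let x, y be non-commuting words and let α be the longest common prefix of x·y and y·x. Then α is a prefix of concat w for every list w over {x,y} with |concat w| ≥ |α|; moreover, if concat w is strictly longer than α, the letter of concat w at position |α| is determined by the first entry of w (it equals the letter following α in x·y if the first entry is x, and the letter following α in y·x if the first entry is y). -/
namespace List

variable {β : Type*}

section lcp

variable [DecidableEq β]

theorem lcp_prefix_left : ∀ l m : List β, lcp l m <+: l
  | [], _ | _ :: _, [] => by simp [lcp]
  | a :: l, b :: m => by
    by_cases h : a = b
    · simpa [lcp, h] using lcp_prefix_left l m
    · simp [lcp, h]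

theorem lcp_prefix_right : ∀ l m : List β, lcp l m <+: m
  | [], _ | _ :: _, [] => by simp [lcp]
  | a :: l, b :: m => by
    by_cases h : a = b
    · simpa [lcp, h] using lcp_prefix_right l m
    · simp [lcp, h]

theorem length_lcp_lt_of_ne {l m : List β} (hne : l ≠ m) (hlen : l.length = m.length) :
    (lcp l m).length < l.length := by
  refine (lcp_prefix_left l m).length_le.lt_of_ne fun heq => hne ?_
  have hl : lcp l m = l := (lcp_prefix_left l m).eq_of_length heq
  exact (hl ▸ lcp_prefix_right l m).eq_of_length hlen

end lcp

variable {a u v s z t : List β}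

theorem prefix_append_self_of_prefix_append_comm (huv : a <+: u ++ v) (hvu : a <+: v ++ u) :
    a <+: u ++ a := by
  rcases le_or_gt a.length u.length with hle | hlt
  · exact (prefix_of_prefix_length_le huv (u.prefix_append v) hle).trans (u.prefix_append a)
  · obtain ⟨c, rfl⟩ := prefix_of_prefix_length_le (u.prefix_append v) huv hlt.le
    have hcv : c <+: v := (prefix_append_right_inj u).mp huv
    have hca : c <+: u ++ c :=
      prefix_of_prefix_length_le (hcv.trans (v.prefix_append u)) hvu (by simp)
    exact (prefix_append_right_inj u).mpr hca

theorem prefix_flatten_append {w : List (List β)} (hw : ∀ s ∈ w, a <+: s ++ a) :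
    a <+: w.flatten ++ a := by
  induction w with
  | nil => simp
  | cons s w ih =>
    have hs : a <+: s ++ a := hw s mem_cons_self
    have htail : a <+: w.flatten ++ a := ih fun r hr => hw r (mem_cons_of_mem s hr)
    rw [flatten_cons, append_assoc]
    exact hs.trans ((prefix_append_right_inj s).mpr htail)

theorem getElem?_append_length_eq_of_prefix (hu : u ≠ []) (hz : a <+: z) (ht : a <+: t) :
    (u ++ z)[a.length]? = (u ++ t)[a.length]? := by
  obtain ⟨z', rfl⟩ := hz
  obtain ⟨t', rfl⟩ := ht
  have hlt : a.length < (u ++ a).length := by simp [length_pos_iff.mpr hu]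
  rw [← append_assoc, ← append_assoc, getElem?_append_left hlt, getElem?_append_left hlt]

theorem getElem?_flatten_cons_eq {w : List (List β)} (hu : u ≠ [])
    (hv : a <+: v ++ a) (hw : ∀ s ∈ w, a <+: s ++ a)
    (hlen : a.length < (u :: w).flatten.length) (hlt : a.length < (u ++ v).length) :
    (u :: w).flatten[a.length]? = (u ++ v)[a.length]? := calc
  (u :: w).flatten[a.length]? = (u ++ (w.flatten ++ a))[a.length]? := by
    rw [← append_assoc, ← flatten_cons, getElem?_append_left hlen]
  _ = (u ++ (v ++ a))[a.length]? :=
    getElem?_append_length_eq_of_prefix hu (prefix_flatten_append hw) hv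
  _ = (u ++ v)[a.length]? := by rw [← append_assoc, getElem?_append_left hlt]

end List

open List in
/-- The longest common prefix `α` of `x·y` and `y·x` is a prefix of every sufficiently
long concatenation of a list over `{x,y}`, and the next letter is determined by the
first entry of the list. -/
theorem bin_code_lcp_pref {α : Type*} [DecidableEq α] (x y : List α)
    (hcomm : x ++ y ≠ y ++ x)
    (w : List (List α)) (hw : ∀ a ∈ w, a = x ∨ a = y) :
    ((lcp (x ++ y) (y ++ x)).length ≤ w.flatten.length → lcp (x ++ y) (y ++ x) <+: w.flatten) ∧
    ((lcp (x ++ y) (y ++ x)).length < w.flatten.length →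
      (w.headI = x → w.flatten[(lcp (x ++ y) (y ++ x)).length]? =
        (x ++ y)[(lcp (x ++ y) (y ++ x)).length]?) ∧
      (w.headI = y → w.flatten[(lcp (x ++ y) (y ++ x)).length]? =
        (y ++ x)[(lcp (x ++ y) (y ++ x)).length]?)) := by
  set a := lcp (x ++ y) (y ++ x)
  have hxy : a <+: x ++ y := lcp_prefix_left _ _
  have hyx : a <+: y ++ x := lcp_prefix_right _ _
  have hx : a <+: x ++ a := prefix_append_self_of_prefix_append_comm hxy hyx
  have hy : a <+: y ++ a := prefix_append_self_of_prefix_append_comm hyx hxy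
  have hlt : a.length < (x ++ y).length := length_lcp_lt_of_ne hcomm (by simp [Nat.add_comm])
  have hx0 : x ≠ [] := by rintro rfl; simp at hcomm
  have hy0 : y ≠ [] := by rintro rfl; simp at hcomm
  have hall : ∀ s ∈ w, a <+: s ++ a := fun s hs => by rcases hw s hs with rfl | rfl <;> assumption
  refine ⟨fun hlen => prefix_of_prefix_length_le (prefix_flatten_append hall)
    (w.flatten.prefix_append a) hlen, fun hlen => ?_⟩
  obtain ⟨s, w, rfl⟩ : ∃ s w', w = s :: w' :=
    exists_cons_of_ne_nil (by rintro rfl; simp at hlen)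
  have htail : ∀ r ∈ w, a <+: r ++ a := fun r hr => hall r (mem_cons_of_mem s hr)
  refine ⟨fun hs => ?_, fun hs => ?_⟩ <;> simp only [headI_cons] at hs <;> subst hs
  · exact getElem?_flatten_cons_eq hx0 hy htail hlen hlt
  · exact getElem?_flatten_cons_eq hy0 hx htail hlen (by simpa [Nat.add_comm] using hlt)
end
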